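/- For every string S ∈ Σ^n \ H_{n,k}, the set f_c(S) has size at least (γk/(3n))·|P(S)|. -/

import Mathlib

open Finset
open scoped Classical

noncomputable section

variable {α : Type*}

/-- `i ↻ n`: 1-indexed wrap-around of an (integer) position. -/
def zwrap (n : ℕ) (i : ℤ) : ℕ := ((i - 1) % (n : ℤ)).toNat + 1

/-- `S*[i]`: the infinite cyclic extension of the length-`n` string `S` (1-indexed). -/
def cext (n : ℕ) (S : ℕ → α) (i : ℕ) : α := S ((i - 1) % n + 1)

/-- The fragment `S*[a..]`, i.e. the string `w` with `w[j] = S*[a+j-1]`. -/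
def frag (n : ℕ) (S : ℕ → α) (a : ℕ) : ℕ → α := fun j => cext n S (a + j - 1)

/-- Hamming distance restricted to positions `[a..b]` (1-indexed strings). -/
def hamIcc (a b : ℕ) (S T : ℕ → α) : ℕ := ((Finset.Icc a b).filter fun j => S j ≠ T j).card

/-- Hamming distance between two length-`n` strings. -/
def ham (n : ℕ) (S T : ℕ → α) : ℕ := hamIcc 1 n S T

/-- `p` is a period of the length-`L` string `w` (1-indexed). -/
def IsPeriod (L : ℕ) (w : ℕ → α) (p : ℕ) : Prop :=
  1 ≤ p ∧ ∀ j, 1 ≤ j → j + p ≤ L → w j = w (j + p)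

/-- `per(w)`: the shortest period of the length-`L` string `w`. -/
def per (L : ℕ) (w : ℕ → α) : ℕ := sInf {p | IsPeriod L w p}

/-- `root(S)`: the length of the primitive root of the length-`n` string `S`,
i.e. the least length of a string `Q` with `S = Q^α`. -/
def root (n : ℕ) (S : ℕ → α) : ℕ := sInf {r | r ∣ n ∧ IsPeriod n S r}

/-- `S` is `(a,b)`-pseudo-periodic: it has an `(a,b)`-base. -/
def PseudoPeriodic (n : ℕ) (a b : ℝ) (S : ℕ → α) : Prop :=
  ∃ S' : ℕ → α, (root n S' : ℝ) ≤ (n : ℝ) / a ∧ (ham n S S' : ℝ) ≤ b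

/-- `cyc(S)`: left cyclic rotation, `cyc(S)[i] = S*[i+1]`. -/
def cyc (n : ℕ) (S : ℕ → α) : ℕ → α := fun i => cext n S (i + 1)

/-- `cyc^m(S)` for an integer `m`: `cyc^m(S)[i] = S*[i+m]` (cyclically). -/
def cycZ (n : ℕ) (m : ℤ) (S : ℕ → α) : ℕ → α := fun i => S (zwrap n ((i : ℤ) + m))

/-- `rot_n(P) = {(i-1) ↻ n : i ∈ P}`. -/
def rotSet (n : ℕ) (P : Finset ℕ) : Finset ℕ := P.image fun i => zwrap n ((i : ℤ) - 1)

/-- `ρ_{S,i} = per(S*[i..i+3ℓ-1])`. -/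
def rho (n ℓ : ℕ) (S : ℕ → α) (i : ℕ) : ℕ := per (3 * ℓ) (frag n S i)

/-- `μ_{S,i}*`: the infinite periodic extension of `μ_{S,i} = S*[i..i+ρ_{S,i}-1]` (1-indexed). -/
def muExt (n ℓ : ℕ) (S : ℕ → α) (i : ℕ) : ℕ → α :=
  fun j => cext n S (i + (j - 1) % rho n ℓ S i)

/-- `P(S)`: the set of cubic positions of `S`. -/
def cubicSet (n ℓ : ℕ) (S : ℕ → α) : Finset ℕ :=
  (Finset.Icc 1 n).filter fun i => rho n ℓ S i ≤ ℓ

/-- The defining set of `τ_{S,i}`: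
`{τ ≥ 1 : τ < (n/(γk))·Ham(S*[i..i+τ-1], μ_{S,i}*[1..τ])}`. -/
def tauSet (n ℓ k : ℕ) (γ : ℝ) (S : ℕ → α) (i : ℕ) : Set ℕ :=
  {τ | 1 ≤ τ ∧ (τ : ℝ) < (n : ℝ) / (γ * k) * (hamIcc 1 τ (frag n S i) (muExt n ℓ S i) : ℝ)}

/-- `τ_{S,i}`. -/
def tau (n ℓ k : ℕ) (γ : ℝ) (S : ℕ → α) (i : ℕ) : ℕ := sInf (tauSet n ℓ k γ S i)

/-- `R_{S,i} = [i..i+τ_{S,i}-1]`. -/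
def Rset (n ℓ k : ℕ) (γ : ℝ) (S : ℕ → α) (i : ℕ) : Finset ℕ :=
  Finset.Icc i (i + tau n ℓ k γ S i - 1)

/-- `M_{S,i} = {j ∈ R_{S,i} : S*[j] ≠ μ_{S,i}*[j-i+1]}`. -/
def Mset (n ℓ k : ℕ) (γ : ℝ) (S : ℕ → α) (i : ℕ) : Finset ℕ :=
  (Rset n ℓ k γ S i).filter fun j => cext n S j ≠ muExt n ℓ S i (j - i + 1)

/-- `A_{S,i} = {j ∈ R_{S,i} : [j..j+2ℓ-1] ⊆ R_{S,i} \ M_{S,i}}`. -/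
def Aset (n ℓ k : ℕ) (γ : ℝ) (S : ℕ → α) (i : ℕ) : Finset ℕ :=
  (Rset n ℓ k γ S i).filter fun j =>
    Finset.Icc j (j + 2 * ℓ - 1) ⊆ Rset n ℓ k γ S i \ Mset n ℓ k γ S i

/-- `f_c(S) = ∪_{i ∈ P(S)} {j ↻ n : j ∈ M_{S,i}}`. -/
def fc (n ℓ k : ℕ) (γ : ℝ) (S : ℕ → α) : Finset ℕ :=
  (cubicSet n ℓ S).biUnion fun i => (Mset n ℓ k γ S i).image fun j => zwrap n (j : ℤ)

/-!
Fix a cubic position `i` with `ρ = ρ_{S,i} ≤ ℓ` and write `u t = S*[i+t]` (an `n`-periodic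
function) and `g = gcd(n,ρ)`. If `τ_{S,i}` did not exist, then at `τ = nρ` the string `u` would
disagree with `t ↦ u (t mod ρ)` in at most `γkρ` places. Writing `t = nq + x` with `x < n`,
`q < ρ`, the residues `(nq + x) mod ρ` run through the class of `x` modulo `g`, each at most `g`
times; averaging over the `ρ/g` candidate bases `x ↦ u (x mod g + g s)`, which are `g`-periodic,
one of them, shifted back by `i`, is within distance `γk` of `S`, so `S ∈ H_{n,k}`. Hence every `τ_{S,i}` exists and
`τ_{S,i} < 3ℓ·|M_{S,i}|`.

If some `τ_{S,i}` exceeds `n`, the set `M_{S,i} ⊆ [i..i+τ_{S,i}-1]` wraps at most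
`τ_{S,i}/n + 1 < 2τ_{S,i}/n` to one onto `f_c(S)`, so `|f_c(S)| ≥ n/(6ℓ)`. Otherwise, greedily
taking the leftmost remaining cubic position and discarding those inside its interval `R_{S,i}`
covers `P(S)` by disjoint intervals whose mismatch sets are disjoint subsets of `[1..2n]`, which
wrap at most three to one. Either way `|P(S)| ≤ 9ℓ·|f_c(S)|`, and `γk/(3n) = 1/(9ℓ)`.
-/

open Function

theorem sum_range_mul_eq_sum_sum {M : Type*} [AddCommMonoid M] (f : ℕ → M) (n ρ : ℕ) :
    ∑ t ∈ range (n * ρ), f t = ∑ q ∈ range ρ, ∑ x ∈ range n, f (n * q + x) := by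
  induction ρ with
  | zero => simp
  | succ ρ ih => rw [Nat.mul_succ, sum_range_add, ih, sum_range_succ]

theorem card_filter_range_add_eq_card_filter_Ico (p : ℕ → Prop) [DecidablePred p] (a L : ℕ) :
    #{t ∈ range L | p (a + t)} = #{j ∈ Ico a (a + L) | p j} := by
  have hIco : Ico a (a + L) = (range L).image (a + ·) := by
    rw [range_eq_Ico, image_add_left_Ico, add_zero]
  rw [hIco, filter_image, card_image_of_injective _ (add_right_injective a)]

theorem card_filter_Icc_eq_card_filter_range (p : ℕ → Prop) [DecidablePred p] {a : ℕ}
    (ha : 1 ≤ a) (L : ℕ) :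
    #{j ∈ Icc a (a + L - 1) | p j} = #{t ∈ range L | p (a + t)} := by
  rw [card_filter_range_add_eq_card_filter_Ico, ← Ico_add_one_right_eq_Icc,
    Nat.sub_add_cancel (by omega)]

theorem Function.Periodic.card_filter_range_add {p : ℕ → Prop} [DecidablePred p] {n : ℕ}
    (hp : Periodic p n) (c : ℕ) : #{t ∈ range n | p (c + t)} = #{t ∈ range n | p t} := by
  rw [card_filter_range_add_eq_card_filter_Ico, Nat.filter_Ico_card_eq_of_periodic _ _ _ hp,
    Nat.count_eq_card_filter_range]

theorem card_filter_mul_add_mod_eq_le_gcd (n x y : ℕ) {ρ : ℕ} (hρ : 0 < ρ) :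
    #{q ∈ range ρ | (n * q + x) % ρ = y} ≤ n.gcd ρ := by
  set g := n.gcd ρ
  have hρ' : ρ / g * g = ρ := Nat.div_mul_cancel (Nat.gcd_dvd_right n ρ)
  calc #{q ∈ range ρ | (n * q + x) % ρ = y}
      ≤ #(range g) := card_le_card_of_injOn (· / (ρ / g)) ?_ ?_
    _ = g := card_range g
  · intro q hq
    rw [mem_coe, mem_filter, mem_range] at hq
    rw [mem_coe, mem_range]
    exact Nat.div_lt_of_lt_mul (by rw [hρ']; exact hq.1)
  · intro q hq q' hq' hdiv
    rw [mem_coe, mem_filter] at hq hq'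
    dsimp only at hdiv
    have hmul : n * q ≡ n * q' [MOD ρ] :=
      Nat.ModEq.add_right_cancel' x (hq.2.trans hq'.2.symm)
    have hmod : q ≡ q' [MOD ρ / g] := by
      simpa [g, Nat.gcd_comm] using hmul.cancel_left_div_gcd hρ
    rw [← Nat.div_add_mod q (ρ / g), ← Nat.div_add_mod q' (ρ / g), hdiv, hmod]

theorem card_filter_eq_le_gcd_mul (u : ℕ → α) (n x : ℕ) {ρ : ℕ} (hρ : 0 < ρ) :
    #{q ∈ range ρ | u x = u ((n * q + x) % ρ)} ≤
      n.gcd ρ * #{s ∈ range (ρ / n.gcd ρ) | u x = u (x % n.gcd ρ + n.gcd ρ * s)} := by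
  set g := n.gcd ρ
  have hrepr : ∀ q, (n * q + x) % ρ = x % g + g * ((n * q + x) % ρ / g) := fun q => by
    have hres : (n * q + x) % ρ % g = x % g := by
      obtain ⟨m, hm⟩ : g ∣ n * q := (Nat.gcd_dvd_left n ρ).mul_right q
      rw [Nat.mod_mod_of_dvd _ (Nat.gcd_dvd_right n ρ), hm, Nat.mul_add_mod]
    rw [← hres, Nat.mod_add_div]
  refine card_le_mul_card_image_of_maps_to (f := fun q => (n * q + x) % ρ / g) ?_ g ?_
  · intro q hq
    rw [mem_filter, mem_range] at hq ⊢
    refine ⟨Nat.div_lt_div_of_lt_of_dvd (Nat.gcd_dvd_right n ρ) (Nat.mod_lt _ hρ), ?_⟩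
    rw [hq.2]
    exact congrArg u (hrepr q)
  · intro s _
    refine le_trans (card_le_card fun q hq => ?_) (card_filter_mul_add_mod_eq_le_gcd n x
      (x % g + g * s) hρ)
    rw [mem_filter] at hq ⊢
    refine ⟨(mem_filter.1 hq.1).1, ?_⟩
    rw [hrepr q, hq.2]

theorem Function.Periodic.exists_periodic_gcd_mul_card_ne_le {u : ℕ → α} {n : ℕ}
    (hu : Periodic u n) {ρ : ℕ} (hρ : 0 < ρ) :
    ∃ v : ℕ → α, Periodic v (n.gcd ρ) ∧
      ρ * #{x ∈ range n | u x ≠ v x} ≤ #{t ∈ range (n * ρ) | u t ≠ u (t % ρ)} := by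
  set g := n.gcd ρ
  have hgρ : g * (ρ / g) = ρ := Nat.mul_div_cancel' (Nat.gcd_dvd_right n ρ)
  let v : ℕ → ℕ → α := fun s x => u (x % g + g * s)
  have hne : (range (ρ / g)).Nonempty :=
    nonempty_range_iff.2 (Nat.div_pos (Nat.gcd_le_right _ hρ) (Nat.gcd_pos_of_pos_right _ hρ)).ne'
  obtain ⟨s, -, hs⟩ :=
    exists_max_image (range (ρ / g)) (fun s => #{x ∈ range n | u x = v s x}) hne
  refine ⟨v s, fun x => by simp [v, Nat.add_mod_right], ?_⟩
  have hT : #{t ∈ range (n * ρ) | u t ≠ u (t % ρ)} =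
      ∑ x ∈ range n, #{q ∈ range ρ | u x ≠ u ((n * q + x) % ρ)} := by
    simp only [card_filter]
    rw [sum_range_mul_eq_sum_sum, sum_comm]
    refine sum_congr rfl fun x _ => sum_congr rfl fun q _ => ?_
    rw [← hu.map_mod_nat (n * q + x), Nat.mul_add_mod, hu.map_mod_nat]
  have hsplit : ∀ x, #{q ∈ range ρ | u x ≠ u ((n * q + x) % ρ)} +
      #{q ∈ range ρ | u x = u ((n * q + x) % ρ)} = ρ := fun x => by
    rw [add_comm, card_filter_add_card_filter_not, card_range]
  have hE : ∑ x ∈ range n, #{q ∈ range ρ | u x = u ((n * q + x) % ρ)} ≤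
      ρ * #{x ∈ range n | u x = v s x} :=
    calc _ ≤ ∑ x ∈ range n, g * #{s' ∈ range (ρ / g) | u x = v s' x} :=
          sum_le_sum fun x _ => card_filter_eq_le_gcd_mul u n x hρ
      _ = g * ∑ s' ∈ range (ρ / g), #{x ∈ range n | u x = v s' x} := by
          rw [← mul_sum]
          simp only [card_filter]
          rw [sum_comm]
      _ ≤ g * ((ρ / g) * #{x ∈ range n | u x = v s x}) := by
          gcongr
          simpa using sum_le_card_nsmul _ _ _ hs
      _ = ρ * #{x ∈ range n | u x = v s x} := by rw [← mul_assoc, hgρ]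
  have hsum : #{t ∈ range (n * ρ) | u t ≠ u (t % ρ)} +
      ∑ x ∈ range n, #{q ∈ range ρ | u x = u ((n * q + x) % ρ)} = n * ρ := by
    rw [hT, ← sum_add_distrib, sum_congr rfl fun x _ => hsplit x, sum_const, card_range,
      smul_eq_mul]
  have hcount : #{x ∈ range n | u x ≠ v s x} + #{x ∈ range n | u x = v s x} = n := by
    rw [add_comm, card_filter_add_card_filter_not, card_range]
  nlinarith

theorem one_le_per (L : ℕ) (w : ℕ → α) : 1 ≤ per L w :=
  (Nat.sInf_mem (s := {p | IsPeriod L w p})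
    ⟨L + 1, by omega, fun j _ h => absurd h (by omega)⟩).1

theorem hamIcc_one_eq_card_filter_range (L : ℕ) (S T : ℕ → α) :
    hamIcc 1 L S T = #{t ∈ range L | S (1 + t) ≠ T (1 + t)} := by
  simpa [hamIcc] using card_filter_Icc_eq_card_filter_range (fun j => S j ≠ T j) le_rfl L

theorem periodic_cext_add (n : ℕ) (S : ℕ → α) {i : ℕ} (hi : 1 ≤ i) :
    Periodic (fun t => cext n S (i + t)) n := fun t => by
  simp only [cext]
  rw [← add_assoc, Nat.sub_add_comm (by omega), Nat.add_mod_right]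

theorem exists_root_le_gcd_mul_ham_le (n : ℕ) (S : ℕ → α) {i ρ : ℕ} (hi : 1 ≤ i)
    (hρ : 0 < ρ) :
    ∃ S' : ℕ → α, root n S' ≤ n.gcd ρ ∧
      ρ * ham n S S' ≤ #{t ∈ range (n * ρ) | cext n S (i + t) ≠ cext n S (i + t % ρ)} := by
  obtain ⟨v, hv, hle⟩ := (periodic_cext_add n S hi).exists_periodic_gcd_mul_card_ne_le hρ
  have hvn : Periodic v n := by
    simpa [Nat.div_mul_cancel (Nat.gcd_dvd_left n ρ)] using hv.nat_mul (n / n.gcd ρ)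
  -- `v` is `n`-periodic, so this base satisfies `S' (i + t) = v t`.
  refine ⟨fun j => v (j + (n - 1) * i), Nat.sInf_le ⟨Nat.gcd_dvd_left n ρ,
    Nat.gcd_pos_of_pos_right n hρ, fun j _ _ => by dsimp only; rw [add_right_comm, hv]⟩, ?_⟩
  have hp : Periodic (fun t => cext n S (1 + t) ≠ v (1 + t + (n - 1) * i)) n := fun t => by
    have hS : cext n S (1 + (t + n)) = cext n S (1 + t) := periodic_cext_add n S le_rfl t
    dsimp only
    rw [hS, ← add_assoc, add_right_comm, hvn]
  refine le_trans (le_of_eq ?_) hle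
  rw [ham, hamIcc_one_eq_card_filter_range]
  congr 1
  calc #{t ∈ range n | S (1 + t) ≠ v (1 + t + (n - 1) * i)}
      = #{t ∈ range n | cext n S (1 + t) ≠ v (1 + t + (n - 1) * i)} := by
        refine congrArg card (filter_congr fun t ht => ?_)
        rw [cext, Nat.add_sub_cancel_left, Nat.mod_eq_of_lt (mem_range.1 ht), add_comm]
    _ = #{t ∈ range n | cext n S (1 + (i - 1 + t)) ≠ v (1 + (i - 1 + t) + (n - 1) * i)} :=
        (hp.card_filter_range_add _).symm
    _ = #{x ∈ range n | cext n S (i + x) ≠ v x} := by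
        refine congrArg card (filter_congr fun t ht => ?_)
        have hin : i ≤ n * i := Nat.le_mul_of_pos_left i (by rw [mem_range] at ht; omega)
        have hshift : 1 + (i - 1 + t) + (n - 1) * i = t + i • n := by
          rw [smul_eq_mul, Nat.sub_one_mul, Nat.mul_comm i n]; omega
        rw [hshift, hvn.nsmul, show 1 + (i - 1 + t) = i + t by omega]

theorem hamIcc_frag_muExt_eq_card_filter (n ℓ L : ℕ) (S : ℕ → α) (i : ℕ) :
    hamIcc 1 L (frag n S i) (muExt n ℓ S i) =
      #{t ∈ range L | cext n S (i + t) ≠ cext n S (i + t % rho n ℓ S i)} := by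
  rw [hamIcc_one_eq_card_filter_range]
  simp only [frag, muExt, Nat.add_sub_cancel_left, ← add_assoc, add_right_comm i 1,
    Nat.add_sub_cancel]

theorem card_Mset (n ℓ k : ℕ) (γ : ℝ) (S : ℕ → α) {i : ℕ} (hi : 1 ≤ i) :
    #(Mset n ℓ k γ S i) = hamIcc 1 (tau n ℓ k γ S i) (frag n S i) (muExt n ℓ S i) := by
  rw [Mset, Rset, card_filter_Icc_eq_card_filter_range _ hi, hamIcc_frag_muExt_eq_card_filter]
  simp only [muExt, add_comm i, Nat.add_sub_cancel]

theorem mem_cubicSet {n ℓ : ℕ} {S : ℕ → α} {i : ℕ} :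
    i ∈ cubicSet n ℓ S ↔ (1 ≤ i ∧ i ≤ n) ∧ rho n ℓ S i ≤ ℓ := by
  rw [cubicSet, mem_filter, mem_Icc]

theorem tauSet_nonempty {n ℓ k : ℕ} {γ : ℝ} {S : ℕ → α} (hγk : 0 < γ * k)
    (hn : (n : ℝ) = 3 * γ * k * ℓ) (hS : ¬ PseudoPeriodic n (3 * γ * k) (γ * k) S) {i : ℕ}
    (hi : i ∈ cubicSet n ℓ S) : (tauSet n ℓ k γ S i).Nonempty := by
  obtain ⟨⟨hi1, hin⟩, hρℓ⟩ := mem_cubicSet.1 hi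
  set ρ := rho n ℓ S i
  have hρ : 0 < ρ := one_le_per _ _
  obtain ⟨S', hroot, hham⟩ := exists_root_le_gcd_mul_ham_le n S hi1 hρ
  have hn0 : (0 : ℝ) < n := by exact_mod_cast (by omega : 0 < n)
  by_contra hempty
  have hT : (hamIcc 1 (n * ρ) (frag n S i) (muExt n ℓ S i) : ℝ) ≤ γ * k * ρ := by
    have hmem : n * ρ ∉ tauSet n ℓ k γ S i := fun h => hempty ⟨_, h⟩
    simp only [tauSet, Set.mem_ofPred_eq, not_and, not_lt] at hmem
    have h := hmem (Nat.mul_pos (by omega) hρ)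
    rw [div_mul_eq_mul_div, div_le_iff₀ hγk] at h
    push_cast at h
    exact le_of_mul_le_mul_left (by linarith) hn0
  rw [hamIcc_frag_muExt_eq_card_filter] at hT
  refine hS ⟨S', ?_, ?_⟩
  · have hℓ : (n : ℝ) / (3 * γ * k) = ℓ := by
      rw [hn, mul_div_cancel_left₀ _ (by linarith : 0 < 3 * γ * k).ne']
    rw [hℓ]
    exact_mod_cast hroot.trans ((Nat.gcd_le_right _ hρ).trans hρℓ)
  · have hρham : (ρ : ℝ) * ham n S S' ≤ ρ * (γ * k) := by
      rw [mul_comm _ (γ * k)]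
      exact le_trans (by exact_mod_cast hham) hT
    exact le_of_mul_le_mul_left hρham (by exact_mod_cast hρ)

theorem tau_pos_and_lt_three_mul_card_Mset {n ℓ k : ℕ} {γ : ℝ} {S : ℕ → α}
    (hγk : 0 < γ * k) (hn : (n : ℝ) = 3 * γ * k * ℓ)
    (hS : ¬ PseudoPeriodic n (3 * γ * k) (γ * k) S) {i : ℕ} (hi : i ∈ cubicSet n ℓ S) :
    0 < tau n ℓ k γ S i ∧ tau n ℓ k γ S i < 3 * ℓ * #(Mset n ℓ k γ S i) := by
  obtain ⟨hpos, hlt⟩ : tau n ℓ k γ S i ∈ tauSet n ℓ k γ S i :=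
    Nat.sInf_mem (tauSet_nonempty hγk hn hS hi)
  have h3ℓ : (n : ℝ) / (γ * k) = 3 * ℓ := by
    rw [hn, show 3 * γ * k * ℓ = γ * k * (3 * ℓ) by ring, mul_div_cancel_left₀ _ hγk.ne']
  rw [h3ℓ, ← card_Mset _ _ _ _ _ (mem_cubicSet.1 hi).1.1] at hlt
  exact ⟨hpos, by exact_mod_cast hlt⟩

theorem zwrap_natCast (n : ℕ) {j : ℕ} (hj : 1 ≤ j) : zwrap n j = (j - 1) % n + 1 := by
  rw [zwrap, ← Nat.cast_one, ← Nat.cast_sub hj, ← Int.natCast_mod, Int.toNat_natCast]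

theorem card_le_mul_card_image_zwrap (n : ℕ) {F : Finset ℕ} {a L : ℕ} (ha : 1 ≤ a)
    (hF : F ⊆ Ico a (a + L)) :
    #F ≤ (L / n + 1) * #(F.image fun j : ℕ => zwrap n (j : ℤ)) := by
  refine card_le_mul_card_image (f := fun j : ℕ => zwrap n (j : ℤ)) F _ fun x _ => ?_
  calc _ ≤ #(range (L / n + 1)) :=
        card_le_card_of_injOn (fun j : ℕ => (j - a) / n) ?_ ?_
    _ = L / n + 1 := card_range _
  · intro j hj
    rw [mem_coe, mem_filter] at hj
    have := mem_Ico.1 (hF hj.1)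
    rw [mem_coe, mem_range, Nat.lt_succ_iff]
    exact Nat.div_le_div_right (by omega)
  · intro j hj j' hj' hdiv
    rw [mem_coe, mem_filter] at hj hj'
    dsimp only at hdiv
    have hja := mem_Ico.1 (hF hj.1)
    have hja' := mem_Ico.1 (hF hj'.1)
    have hmod : j - 1 ≡ j' - 1 [MOD n] := by
      have h := hj.2.trans hj'.2.symm
      rwa [zwrap_natCast n (by omega), zwrap_natCast n (by omega), Nat.add_right_cancel_iff] at h
    have hmod' : j - a ≡ j' - a [MOD n] := by
      refine Nat.ModEq.add_right_cancel' (a - 1) ?_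
      rwa [show j - a + (a - 1) = j - 1 by omega, show j' - a + (a - 1) = j' - 1 by omega]
    have := (Nat.div_add_mod (j - a) n).symm
    rw [hdiv, hmod', Nat.div_add_mod] at this
    omega

theorem exists_subset_biUnion_card_le_mul (c : ℕ) (τ : ℕ → ℕ) (M : ℕ → Finset ℕ)
    (P : Finset ℕ) (hτ : ∀ i ∈ P, 0 < τ i) (hM : ∀ i ∈ P, M i ⊆ Ico i (i + τ i))
    (hτM : ∀ i ∈ P, τ i ≤ c * #(M i)) : ∃ F ⊆ P.biUnion M, #P ≤ c * #F := by
  induction P using Finset.strongInduction with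
  | H P ih =>
  rcases P.eq_empty_or_nonempty with rfl | hP
  · exact ⟨∅, empty_subset _, by simp⟩
  set i := P.min' hP
  have hi : i ∈ P := P.min'_mem hP
  set Q := P.filter (i + τ i ≤ ·)
  have hQP : Q ⊂ P := filter_ssubset.2 ⟨i, hi, by have := hτ i hi; omega⟩
  obtain ⟨F, hF, hPF⟩ := ih Q hQP (fun j hj => hτ j (hQP.subset hj))
    (fun j hj => hM j (hQP.subset hj)) (fun j hj => hτM j (hQP.subset hj))
  have hdisj : Disjoint (M i) F := by
    refine disjoint_left.2 fun x hxi hxF => ?_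
    obtain ⟨j, hjQ, hxj⟩ := mem_biUnion.1 (hF hxF)
    have := mem_Ico.1 (hM i hi hxi)
    have := mem_Ico.1 (hM j (hQP.subset hjQ) hxj)
    have := (mem_filter.1 hjQ).2
    omega
  have hPQ : #P ≤ τ i + #Q := by
    have hlow : #{j ∈ P | ¬ i + τ i ≤ j} ≤ τ i := by
      calc _ ≤ #(Ico i (i + τ i)) := card_le_card fun j hj => by
            rw [mem_filter] at hj
            exact mem_Ico.2 ⟨P.min'_le j hj.1, by omega⟩
        _ = τ i := by simp
    have hsplit : #Q + #{j ∈ P | ¬ i + τ i ≤ j} = #P := card_filter_add_card_filter_not _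
    omega
  refine ⟨M i ∪ F, union_subset (subset_biUnion_of_mem M hi)
    (hF.trans (biUnion_subset_biUnion_of_subset_left M hQP.subset)), ?_⟩
  rw [card_union_of_disjoint hdisj, mul_add]
  have := hτM i hi
  omega

section Covering

variable {n ℓ k : ℕ} {γ : ℝ} {S : ℕ → α}

-- `fc` casts each `Mset` to a `Finset ℤ` before taking the image under `zwrap n`.
theorem image_zwrap_subset_fc {F : Finset ℕ}
    (hF : F ⊆ (cubicSet n ℓ S).biUnion (Mset n ℓ k γ S)) :
    F.image (fun j : ℕ => zwrap n (j : ℤ)) ⊆ fc n ℓ k γ S := by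
  intro x hx
  obtain ⟨j, hj, rfl⟩ := mem_image.1 hx
  obtain ⟨i, hi, hji⟩ := mem_biUnion.1 (hF hj)
  simp only [fc, pure_def, bind_def, sup_singleton_apply, mem_biUnion, mem_image,
    exists_exists_and_eq_and]
  exact ⟨i, hi, j, hji, rfl⟩

theorem Mset_subset_Ico {i : ℕ} (hτ : 0 < tau n ℓ k γ S i) :
    Mset n ℓ k γ S i ⊆ Ico i (i + tau n ℓ k γ S i) := fun j hj => by
  have := mem_Icc.1 (filter_subset _ _ hj : j ∈ Rset n ℓ k γ S i)
  exact mem_Ico.2 ⟨by omega, by omega⟩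

variable (htau : ∀ i ∈ cubicSet n ℓ S,
  0 < tau n ℓ k γ S i ∧ tau n ℓ k γ S i ≤ 3 * ℓ * #(Mset n ℓ k γ S i))
include htau

theorem card_cubicSet_le_of_lt_tau {i : ℕ} (hi : i ∈ cubicSet n ℓ S)
    (hni : n < tau n ℓ k γ S i) : #(cubicSet n ℓ S) ≤ 6 * ℓ * #(fc n ℓ k γ S) := by
  set τ := tau n ℓ k γ S i
  set m := #(fc n ℓ k γ S)
  have hMfc : #(Mset n ℓ k γ S i) ≤ (τ / n + 1) * m :=
    (card_le_mul_card_image_zwrap n (mem_cubicSet.1 hi).1.1 (Mset_subset_Ico (htau i hi).1)).trans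
      (Nat.mul_le_mul_left _ (card_le_card (image_zwrap_subset_fc (subset_biUnion_of_mem _ hi))))
  have hdiv : n * (τ / n) ≤ τ := Nat.mul_div_le _ _
  have hnτ : n * τ ≤ τ * (6 * ℓ * m) :=
    calc n * τ ≤ n * (3 * ℓ * ((τ / n + 1) * m)) :=
          Nat.mul_le_mul_left _ ((htau i hi).2.trans (Nat.mul_le_mul_left _ hMfc))
      _ = 3 * ℓ * m * (n * (τ / n) + n) := by ring
      _ ≤ 3 * ℓ * m * (2 * τ) := Nat.mul_le_mul_left _ (by omega)
      _ = τ * (6 * ℓ * m) := by ring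
  calc #(cubicSet n ℓ S) ≤ n := (card_filter_le _ _).trans (by simp)
    _ ≤ 6 * ℓ * m := Nat.le_of_mul_le_mul_left (by rwa [mul_comm]) (htau i hi).1

theorem card_cubicSet_le_of_tau_le (hshort : ∀ i ∈ cubicSet n ℓ S, tau n ℓ k γ S i ≤ n) :
    #(cubicSet n ℓ S) ≤ 9 * ℓ * #(fc n ℓ k γ S) := by
  obtain ⟨F, hF, hPF⟩ := exists_subset_biUnion_card_le_mul (3 * ℓ) (tau n ℓ k γ S)
    (Mset n ℓ k γ S) (cubicSet n ℓ S) (fun i hi => (htau i hi).1)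
    (fun i hi => Mset_subset_Ico (htau i hi).1) (fun i hi => (htau i hi).2)
  have hF2n : F ⊆ Ico 1 (1 + 2 * n) := fun x hx => by
    obtain ⟨i, hi, hxi⟩ := mem_biUnion.1 (hF hx)
    have := mem_Ico.1 (Mset_subset_Ico (htau i hi).1 hxi)
    have := (mem_cubicSet.1 hi).1
    have := hshort i hi
    exact mem_Ico.2 ⟨by omega, by omega⟩
  have h2 : 2 * n / n ≤ 2 := Nat.div_le_of_le_mul (by omega)
  have hFfc : #F ≤ 3 * #(fc n ℓ k γ S) :=
    calc #F ≤ (2 * n / n + 1) * #(F.image fun j : ℕ => zwrap n (j : ℤ)) :=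
          card_le_mul_card_image_zwrap n le_rfl hF2n
      _ ≤ 3 * #(fc n ℓ k γ S) :=
          Nat.mul_le_mul (by omega) (card_le_card (image_zwrap_subset_fc hF))
  calc #(cubicSet n ℓ S) ≤ 3 * ℓ * #F := hPF
    _ ≤ 3 * ℓ * (3 * #(fc n ℓ k γ S)) := Nat.mul_le_mul_left _ hFfc
    _ = 9 * ℓ * #(fc n ℓ k γ S) := by ring

theorem card_cubicSet_le_mul_card_fc : #(cubicSet n ℓ S) ≤ 9 * ℓ * #(fc n ℓ k γ S) := by
  by_cases hlong : ∃ i ∈ cubicSet n ℓ S, n < tau n ℓ k γ S i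
  · obtain ⟨i, hi, hni⟩ := hlong
    exact (card_cubicSet_le_of_lt_tau htau hi hni).trans (by gcongr; omega)
  · simp only [not_exists, not_and, not_lt] at hlong
    exact card_cubicSet_le_of_tau_le htau hlong

end Covering

theorem stmt11_general {α : Type*} (n k ℓ : ℕ) (γ : ℝ)
    (hn : (n : ℝ) = 3 * γ * k * ℓ)
    (S : ℕ → α) (hS : ¬ PseudoPeriodic n (3 * γ * k) (γ * k) S) :
    γ * k / (3 * n) * ((cubicSet n ℓ S).card : ℝ) ≤ ((fc n ℓ k γ S).card : ℝ) := by
  rcases Nat.eq_zero_or_pos n with rfl | hn0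
  · simp [cubicSet]
  have hn0' : (0 : ℝ) < n := by exact_mod_cast hn0
  have hℓ : (0 : ℝ) < ℓ := by
    rcases Nat.eq_zero_or_pos ℓ with h | h
    · simp [h] at hn; omega
    · exact_mod_cast h
  have hγk : 0 < γ * k := by nlinarith
  have hcard : #(cubicSet n ℓ S) ≤ 9 * ℓ * #(fc n ℓ k γ S) :=
    card_cubicSet_le_mul_card_fc fun i hi =>
      (tau_pos_and_lt_three_mul_card_Mset hγk hn hS hi).imp_right le_of_lt
  have hcoef : γ * k / (3 * n) = 1 / (9 * ℓ) := by
    rw [div_eq_div_iff (by positivity) (by positivity), hn]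
    ring
  rw [hcoef, one_div_mul_eq_div, div_le_iff₀ (by positivity)]
  exact_mod_cast (by linarith [hcard] : #(cubicSet n ℓ S) ≤ #(fc n ℓ k γ S) * (9 * ℓ))

/-- For every `S ∈ Σ^n \ H_{n,k}`, `|f_c(S)| ≥ (γk/(3n))·|P(S)|`. -/
theorem stmt11 {α : Type*} (n k ℓ : ℕ) (γ : ℝ)
    (hk1 : 1 ≤ k) (hkn : k ≤ n) (hγ : 14 ≤ γ) (hℓ1 : 1 ≤ ℓ)
    (hn : (n : ℝ) = 3 * γ * k * ℓ)
    (S : ℕ → α) (hS : ¬ PseudoPeriodic n (3 * γ * k) (γ * k) S) :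
    γ * k / (3 * n) * ((cubicSet n ℓ S).card : ℝ) ≤ ((fc n ℓ k γ S).card : ℝ) :=
  stmt11_general n k ℓ γ hn S hS
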